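/- arXiv:2310.19140 — 2 statements merged into one kernel-verified Lean document; each statement's English description precedes it below -/
import Mathlib

section
/- Let $r > 0$ and $\Omega_t = \{z \in \mathbb{C}^4 : |z_1| + |z'| < r - t\}$ for $0 \le t < r$. Let $a$ be holomorphic on $\Omega_0$ with $\sup_{\Omega_s} |a| \le M m^m s^{-m}$ for all $s \in (0,r)$, where $m \ge 1$ is an integer and $M \ge 0$ (convention $0^0=1$ if needed). Let $Q(z, D_z)$ be a differential operator of order at most $2$ with holomorphic coefficients bounded on a neighbourhood of $\overline{\Omega_0}$. Then there exists $C > 0$ (depending only on $Q$) such that for all $t \in (0, r)$, $\sup_{\Omega_t} |Q(z,D_z) a| \le C M (m+2)^{m+2} t^{-(m+2)}$. -/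
/-!
Cauchy estimates along complex lines. If `f` is holomorphic and bounded by `B` on `{p < ρ}`
for a continuous seminorm `p`, the Schwarz lemma on the disc `u ↦ z + u • v` bounds the
increments of `f` along `v` at a point with `p z ≤ ρ'` by `2 B p(v) |u| / (ρ - ρ')`, hence
the derivative in direction `v`. Applied on an intermediate level to the increment
`x ↦ f (x + u • w) - f x`, the same estimate bounds second derivatives by
`16 B p(v) p(w) / (ρ - ρ')²`, without knowing that `fderiv f · v` is holomorphic.
For the operator one uses the bound `M m^m s^{-m}` at the level `s = m t / (m + 2)`: then
`t - s = 2 t / (m + 2)` and `m^m s^{-m} (t - s)^{-2} = (m + 2)^{m+2} t^{-(m+2)} / 4`.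
-/

open Metric Set Filter Topology

section LineEstimates

variable {E F : Type*} [NormedAddCommGroup E] [NormedSpace ℂ E]
  [NormedAddCommGroup F] [NormedSpace ℂ F]

theorem norm_fderiv_apply_le_of_lip' {g : E → F} {z v : E} {L : ℝ} (hL : 0 ≤ L)
    (h : ∀ᶠ u : ℂ in 𝓝 0, ‖g (z + u • v) - g z‖ ≤ L * ‖u‖) :
    ‖fderiv ℂ g z v‖ ≤ L := by
  by_cases hg : DifferentiableAt ℂ g z
  · refine HasDerivAt.le_of_lip' (hg.hasFDerivAt.hasLineDerivAt v) hL ?_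
    simpa using h
  · simpa [fderiv_zero_of_not_differentiableAt hg] using hL

theorem Seminorm.apply_add_smul_le (p : Seminorm ℂ E) (x w : E) (u : ℂ) :
    p (x + u • w) ≤ p x + ‖u‖ * p w := by
  simpa only [map_smul_eq_mul] using map_add_le_add p x (u • w)

variable {p : Seminorm ℂ E} {f : E → F} {ρ ρ' B : ℝ} {z v : E}

theorem norm_add_smul_sub_le_of_seminorm (hp : Continuous p)
    (hf : DifferentiableOn ℂ f {x | p x < ρ}) (hB : ∀ x, p x < ρ → ‖f x‖ ≤ B)
    (hz : p z ≤ ρ') {u : ℂ} (hu : ‖u‖ * p v < ρ - ρ') :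
    ‖f (z + u • v) - f z‖ ≤ 2 * B * p v / (ρ - ρ') * ‖u‖ := by
  have hρ : 0 < ρ - ρ' := lt_of_le_of_lt (by positivity) hu
  have hline : ∀ w : ℂ, ‖w‖ * p v < ρ - ρ' → p (z + w • v) < ρ := fun w hw => by
    linarith [p.apply_add_smul_le z v w]
  have hdiff : ∀ w : ℂ, ‖w‖ * p v < ρ - ρ' →
      DifferentiableAt ℂ (fun w : ℂ => f (z + w • v)) w := fun w hw =>
    (hf.differentiableAt ((isOpen_lt hp continuous_const).mem_nhds (hline w hw))).comp w
      (by fun_prop)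
  rcases (apply_nonneg p v).eq_or_lt with hv | hv
  · -- the whole complex line through `z` lies in the ball, so Liouville applies
    have hall : ∀ w : ℂ, ‖w‖ * p v < ρ - ρ' := fun w => by rwa [← hv, mul_zero]
    have hconst := Differentiable.apply_eq_apply_of_bounded (fun w => hdiff w (hall w))
      (isBounded_iff_forall_norm_le.2 ⟨B, by rintro _ ⟨w, rfl⟩; exact hB _ (hline w (hall w))⟩)
      u 0
    simp [← hv, hconst]
  · have hball : ∀ w ∈ ball (0 : ℂ) ((ρ - ρ') / p v), ‖w‖ * p v < ρ - ρ' := fun w hw => by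
      rwa [mem_ball_zero_iff, lt_div_iff₀ hv] at hw
    have hmaps : MapsTo (fun w : ℂ => f (z + w • v)) (ball 0 ((ρ - ρ') / p v))
        (closedBall (f (z + (0 : ℂ) • v)) (2 * B)) := fun w hw => by
      rw [mem_closedBall, dist_eq_norm]
      have h₁ := hB _ (hline w (hball w hw))
      have h₂ := hB _ (hline 0 (by simpa using hρ))
      linarith [norm_sub_le (f (z + w • v)) (f (z + (0 : ℂ) • v))]
    have := Complex.dist_le_div_mul_dist_of_mapsTo_ball
      (fun w hw => (hdiff w (hball w hw)).differentiableWithinAt) hmaps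
      (mem_ball_zero_iff.2 ((lt_div_iff₀ hv).2 hu))
    simpa [dist_eq_norm, div_div_eq_mul_div] using this

theorem eventually_norm_mul_lt {c g : ℝ} (hg : 0 < g) : ∀ᶠ u : ℂ in 𝓝 0, ‖u‖ * c < g :=
  (continuous_norm.mul continuous_const).continuousAt.eventually_lt continuousAt_const
    (by simpa using hg)

theorem norm_fderiv_apply_le_of_seminorm (hp : Continuous p)
    (hf : DifferentiableOn ℂ f {x | p x < ρ}) (hB : ∀ x, p x < ρ → ‖f x‖ ≤ B)
    (hz : p z ≤ ρ') (hρ : ρ' < ρ) (v : E) :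
    ‖fderiv ℂ f z v‖ ≤ 2 * B * p v / (ρ - ρ') := by
  have hB0 : 0 ≤ B := (norm_nonneg _).trans (hB z (by linarith))
  refine norm_fderiv_apply_le_of_lip' (by have := apply_nonneg p v; bound) ?_
  filter_upwards [eventually_norm_mul_lt (c := p v) (sub_pos.2 hρ)] with u hu
  exact norm_add_smul_sub_le_of_seminorm hp hf hB hz hu

theorem norm_fderiv_fderiv_apply_le_of_seminorm {ρ₁ : ℝ} (hp : Continuous p)
    (hf : DifferentiableOn ℂ f {x | p x < ρ}) (hB : ∀ x, p x < ρ → ‖f x‖ ≤ B)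
    (hz : p z ≤ ρ') (hρ' : ρ' < ρ₁) (hρ₁ : ρ₁ < ρ) (v w : E) :
    ‖fderiv ℂ (fun x => fderiv ℂ f x v) z w‖ ≤
      2 * (2 * B * p w / (ρ - ρ₁)) * p v / (ρ₁ - ρ') := by
  have hB0 : 0 ≤ B := (norm_nonneg _).trans (hB z (by linarith))
  have hdiffAt : ∀ x, p x < ρ → DifferentiableAt ℂ f x := fun x hx =>
    hf.differentiableAt ((isOpen_lt hp continuous_const).mem_nhds hx)
  have hshift : ∀ x : E, ∀ u : ℂ, ‖u‖ * p w < ρ - ρ₁ → p x < ρ₁ → p (x + u • w) < ρ :=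
    fun x u hu hx => by linarith [p.apply_add_smul_le x w u]
  have hpv := apply_nonneg p v
  have hpw := apply_nonneg p w
  have hgap := sub_pos.2 hρ₁
  have hgap' := sub_pos.2 hρ'
  refine norm_fderiv_apply_le_of_lip' (by positivity) ?_
  filter_upwards [eventually_norm_mul_lt (c := p w) hgap] with u hu
  -- the increment of `fderiv f · v` along `w` is the derivative of the increment of `f`
  set h : E → F := fun x => f (x + u • w) - f x
  have hh : DifferentiableOn ℂ h {x | p x < ρ₁} := fun x hx =>
    (((hdiffAt _ (hshift x u hu hx)).comp x (by fun_prop)).sub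
      (hdiffAt x (lt_trans hx hρ₁))).differentiableWithinAt
  have hhB : ∀ x, p x < ρ₁ → ‖h x‖ ≤ 2 * B * p w / (ρ - ρ₁) * ‖u‖ := fun x hx =>
    norm_add_smul_sub_le_of_seminorm hp hf hB hx.le hu
  have hfd : fderiv ℂ h z v = fderiv ℂ f (z + u • w) v - fderiv ℂ f z v := by
    have hzw := hdiffAt _ (hshift z u hu (by linarith))
    have hz' := hdiffAt z (by linarith)
    rw [fderiv_fun_sub ((differentiableAt_comp_add_right _).2 hzw) hz', fderiv_comp_add_right]
    rfl
  calc ‖fderiv ℂ f (z + u • w) v - fderiv ℂ f z v‖ = ‖fderiv ℂ h z v‖ := by rw [hfd]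
    _ ≤ 2 * (2 * B * p w / (ρ - ρ₁) * ‖u‖) * p v / (ρ₁ - ρ') :=
      norm_fderiv_apply_le_of_seminorm hp hh hhB hz hρ' v
    _ = 2 * (2 * B * p w / (ρ - ρ₁)) * p v / (ρ₁ - ρ') * ‖u‖ := by ring

theorem norm_add_sum_add_sum_le {R ι : Type*} [SeminormedRing R] [Fintype ι] {K α : ℝ}
    {c₀ a : R} {c₁ c₂ A₁ A₂ : ι → R} {β γ : ι → ℝ} (hc₀ : ‖c₀‖ ≤ K)
    (hc : ∀ i, ‖c₁ i‖ ≤ K ∧ ‖c₂ i‖ ≤ K) (ha : ‖a‖ ≤ α) (h₁ : ∀ i, ‖A₁ i‖ ≤ β i)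
    (h₂ : ∀ i, ‖A₂ i‖ ≤ γ i) :
    ‖c₀ * a + ∑ i, c₁ i * A₁ i + ∑ i, c₂ i * A₂ i‖ ≤ K * (α + ∑ i, β i + ∑ i, γ i) := by
  have hK : 0 ≤ K := (norm_nonneg _).trans hc₀
  have hmul : ∀ {c A : R} {b : ℝ}, ‖c‖ ≤ K → ‖A‖ ≤ b → ‖c * A‖ ≤ K * b := fun hc hA =>
    (norm_mul_le _ _).trans (mul_le_mul hc hA (norm_nonneg _) hK)
  have hsum : ∀ {c A : ι → R} {b : ι → ℝ}, (∀ i, ‖c i‖ ≤ K) → (∀ i, ‖A i‖ ≤ b i) →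
      ‖∑ i, c i * A i‖ ≤ K * ∑ i, b i := fun hc hA => by
    rw [Finset.mul_sum]
    exact (norm_sum_le _ _).trans (Finset.sum_le_sum fun i _ => hmul (hc i) (hA i))
  calc _ ≤ ‖c₀ * a‖ + ‖∑ i, c₁ i * A₁ i‖ + ‖∑ i, c₂ i * A₂ i‖ := norm_add₃_le
    _ ≤ K * α + K * ∑ i, β i + K * ∑ i, γ i := by
      gcongr
      exacts [hmul hc₀ ha, hsum (fun i => (hc i).1) h₁, hsum (fun i => (hc i).2) h₂]
    _ = _ := by ring

theorem norm_secondOrder_le_of_seminorm {ι : Type*} [Fintype ι] {f : E → ℂ}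
    (hp : Continuous p) (hf : DifferentiableOn ℂ f {x | p x < ρ})
    (hB : ∀ x, p x < ρ → ‖f x‖ ≤ B) (hz : p z ≤ ρ') (hρ : ρ' < ρ)
    {K : ℝ} {c₀ : ℂ} {c₁ c₂ : ι → ℂ} (hc₀ : ‖c₀‖ ≤ K) (hc : ∀ i, ‖c₁ i‖ ≤ K ∧ ‖c₂ i‖ ≤ K)
    (e d d' : ι → E) :
    ‖c₀ * f z + ∑ i, c₁ i * fderiv ℂ f z (e i)
        + ∑ j, c₂ j * fderiv ℂ (fun w => fderiv ℂ f w (d j)) z (d' j)‖ ≤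
      K * B * (1 + 2 * (∑ i, p (e i)) / (ρ - ρ')
        + 16 * (∑ j, p (d j) * p (d' j)) / (ρ - ρ') ^ 2) := by
  have h₀ : ‖f z‖ ≤ B := hB z (by linarith)
  have h₁ : ∀ i, ‖fderiv ℂ f z (e i)‖ ≤ 2 * B * p (e i) / (ρ - ρ') := fun i =>
    norm_fderiv_apply_le_of_seminorm hp hf hB hz hρ (e i)
  have h₂ : ∀ j, ‖fderiv ℂ (fun w => fderiv ℂ f w (d j)) z (d' j)‖ ≤
      16 * B * (p (d j) * p (d' j)) / (ρ - ρ') ^ 2 := fun j => by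
    have := norm_fderiv_fderiv_apply_le_of_seminorm (ρ₁ := (ρ + ρ') / 2) hp hf hB hz
      (by linarith) (by linarith) (d j) (d' j)
    rw [show ρ - (ρ + ρ') / 2 = (ρ - ρ') / 2 by ring,
      show (ρ + ρ') / 2 - ρ' = (ρ - ρ') / 2 by ring] at this
    convert this using 1
    field_simp
    ring
  refine (norm_add_sum_add_sum_le hc₀ hc h₀ h₁ h₂).trans_eq ?_
  simp only [← Finset.sum_div, ← Finset.mul_sum]
  field_simp

end LineEstimates

def prodL1Seminorm (𝕜 E F : Type*) [NormedField 𝕜] [SeminormedAddCommGroup E] [NormedSpace 𝕜 E]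
    [SeminormedAddCommGroup F] [NormedSpace 𝕜 F] : Seminorm 𝕜 (E × F) :=
  (normSeminorm 𝕜 E).comp (LinearMap.fst 𝕜 E F) + (normSeminorm 𝕜 F).comp (LinearMap.snd 𝕜 E F)

section prodL1Seminorm

variable {𝕜 E F : Type*} [NormedField 𝕜] [SeminormedAddCommGroup E] [NormedSpace 𝕜 E]
    [SeminormedAddCommGroup F] [NormedSpace 𝕜 F]

theorem prodL1Seminorm_apply (x : E × F) : prodL1Seminorm 𝕜 E F x = ‖x.1‖ + ‖x.2‖ := rfl

theorem continuous_prodL1Seminorm : Continuous (prodL1Seminorm 𝕜 E F) := by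
  simp only [funext prodL1Seminorm_apply]
  fun_prop

end prodL1Seminorm

theorem rate_at_optimal_scale (M : ℝ) {t : ℝ} (ht : 0 < t) (m : ℕ) :
    M * (m : ℝ) ^ m / (t - 2 * t / (m + 2)) ^ m =
      M * ((m : ℝ) + 2) ^ (m + 2) / t ^ (m + 2) * ((2 * t / (m + 2)) ^ 2 / 4) := by
  rw [show t - 2 * t / (m + 2) = m * t / (m + 2) by field_simp; ring]
  rcases (Nat.zero_le m).eq_or_lt with rfl | hm
  · field_simp
    ring
  · have : (0 : ℝ) < m := by exact_mod_cast hm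
    rw [div_pow, mul_pow]
    field_simp
    ring

theorem stmt_5_general (r : ℝ) (hr : 0 < r)
    (Ω : ℝ → Set (ℂ × EuclideanSpace ℂ (Fin 3)))
    (hΩ : ∀ t, Ω t = {z | ‖z.1‖ + ‖z.2‖ < r - t})
    -- the operator Q: coefficients and (constant) directions
    (n : ℕ) (c₀ : ℂ × EuclideanSpace ℂ (Fin 3) → ℂ)
    (c₁ c₂ : Fin n → ℂ × EuclideanSpace ℂ (Fin 3) → ℂ)
    (e d d' : Fin n → ℂ × EuclideanSpace ℂ (Fin 3))
    -- coefficients holomorphic and bounded on a neighbourhood of `closure Ω₀`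
    (U : Set (ℂ × EuclideanSpace ℂ (Fin 3))) (hUΩ : closure (Ω 0) ⊆ U)
    (K : ℝ) (hK : ∀ z ∈ U, ‖c₀ z‖ ≤ K ∧
      ∀ i, ‖c₁ i z‖ ≤ K ∧ ‖c₂ i z‖ ≤ K) :
    ∃ C > 0, ∀ (M : ℝ), 0 ≤ M → ∀ (m : ℕ), 1 ≤ m →
      ∀ a : ℂ × EuclideanSpace ℂ (Fin 3) → ℂ, DifferentiableOn ℂ a (Ω 0) →
      (∀ s ∈ Set.Ioo (0:ℝ) r, ∀ z ∈ Ω s, ‖a z‖ ≤ M * (m : ℝ) ^ m / s ^ m) →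
      ∀ t ∈ Set.Ioo (0:ℝ) r, ∀ z ∈ Ω t,
        ‖c₀ z * a z
            + ∑ i, c₁ i z * fderiv ℂ a z (e i)
            + ∑ j, c₂ j z * fderiv ℂ (fun w => fderiv ℂ a w (d j)) z (d' j)‖
          ≤ C * M * ((m : ℝ) + 2) ^ (m + 2) / t ^ (m + 2) := by
  set p := prodL1Seminorm ℂ ℂ (EuclideanSpace ℂ (Fin 3))
  have hΩp : ∀ t, Ω t = {z | p z < r - t} := hΩ
  have hΩ_anti : ∀ {s t : ℝ}, s ≤ t → Ω t ⊆ Ω s := fun {s t} hst x hx => by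
    rw [hΩp] at hx ⊢
    exact (show p x < r - t from hx).trans_le (by linarith)
  have hK0 : 0 ≤ K :=
    (norm_nonneg _).trans (hK 0 (hUΩ (subset_closure (by simpa [hΩp] using hr)))).1
  set S₁ := ∑ i, p (e i)
  set S₂ := ∑ j, p (d j) * p (d' j)
  have hS₁ : 0 ≤ S₁ := Finset.sum_nonneg fun i _ => apply_nonneg p _
  have hS₂ : 0 ≤ S₂ :=
    Finset.sum_nonneg fun j _ => mul_nonneg (apply_nonneg p _) (apply_nonneg p _)
  refine ⟨K * (r ^ 2 + r * S₁ + 4 * S₂) + 1, by positivity, ?_⟩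
  intro M hM m hm a ha hbound t ⟨ht, htr⟩ z hz
  -- the paper's intermediate scale `s = m t / (m + 2)` is `t - δ`
  set δ := 2 * t / (m + 2)
  have hδ : 0 < δ := by positivity
  have hδt : δ < t := by
    rw [div_lt_iff₀ (by positivity)]
    nlinarith [(Nat.one_le_cast.2 hm : (1 : ℝ) ≤ m)]
  set Y := M * ((m : ℝ) + 2) ^ (m + 2) / t ^ (m + 2)
  have hY : 0 ≤ Y := by positivity
  have hX : M * (m : ℝ) ^ m / (t - δ) ^ m = Y * (δ ^ 2 / 4) := rate_at_optimal_scale M ht m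
  have hzU : z ∈ U := hUΩ (subset_closure (hΩ_anti ht.le hz))
  have hQ := norm_secondOrder_le_of_seminorm (p := p) (ρ := r - (t - δ)) (ρ' := r - t)
    continuous_prodL1Seminorm (ha.mono (hΩp _ ▸ hΩ_anti (by linarith)))
    (fun x hx => hbound (t - δ) ⟨by linarith, by linarith⟩ x (hΩp _ ▸ hx))
    (by rw [hΩp] at hz; exact hz.le) (by linarith) (hK z hzU).1 (hK z hzU).2 e d d'
  rw [hX, show r - (t - δ) - (r - t) = δ by ring] at hQ
  have hδr : δ < r := hδt.trans htr
  calc _ ≤ _ := hQ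
    _ = K * Y * (δ ^ 2 / 4 + δ / 2 * S₁ + 4 * S₂) := by field_simp; ring
    _ ≤ K * Y * (r ^ 2 + r * S₁ + 4 * S₂) := by gcongr <;> nlinarith
    _ ≤ (K * (r ^ 2 + r * S₁ + 4 * S₂) + 1) * Y := by nlinarith
    _ = _ := by simp only [Y]; ring

/-- A second-order differential operator `Q` with holomorphic coefficients bounded on a
neighbourhood of `closure Ω₀` maps functions with blow-up rate `M m^m s^{-m}` on the
scale `Ω_s` to functions with rate `C M (m+2)^{m+2} t^{-(m+2)}`, with `C` depending
only on `Q` (and `r`). Here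
`Q a z = c₀ z • a z + ∑ i, c₁ i z • (fderiv a z)(e i) + ∑ j, c₂ j z • (fderiv² a z)(d j)(d' j)`. -/
theorem stmt_5 (r : ℝ) (hr : 0 < r)
    (Ω : ℝ → Set (ℂ × EuclideanSpace ℂ (Fin 3)))
    (hΩ : ∀ t, Ω t = {z | ‖z.1‖ + ‖z.2‖ < r - t})
    -- the operator Q: coefficients and (constant) directions
    (n : ℕ) (c₀ : ℂ × EuclideanSpace ℂ (Fin 3) → ℂ)
    (c₁ c₂ : Fin n → ℂ × EuclideanSpace ℂ (Fin 3) → ℂ)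
    (e d d' : Fin n → ℂ × EuclideanSpace ℂ (Fin 3))
    -- coefficients holomorphic and bounded on a neighbourhood of `closure Ω₀`
    (U : Set (ℂ × EuclideanSpace ℂ (Fin 3))) (hU : IsOpen U) (hUΩ : closure (Ω 0) ⊆ U)
    (hc₀ : DifferentiableOn ℂ c₀ U) (hc₁ : ∀ i, DifferentiableOn ℂ (c₁ i) U)
    (hc₂ : ∀ i, DifferentiableOn ℂ (c₂ i) U)
    (K : ℝ) (hK : ∀ z ∈ U, ‖c₀ z‖ ≤ K ∧
      ∀ i, ‖c₁ i z‖ ≤ K ∧ ‖c₂ i z‖ ≤ K) :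
    ∃ C > 0, ∀ (M : ℝ), 0 ≤ M → ∀ (m : ℕ), 1 ≤ m →
      ∀ a : ℂ × EuclideanSpace ℂ (Fin 3) → ℂ, DifferentiableOn ℂ a (Ω 0) →
      (∀ s ∈ Set.Ioo (0:ℝ) r, ∀ z ∈ Ω s, ‖a z‖ ≤ M * (m : ℝ) ^ m / s ^ m) →
      ∀ t ∈ Set.Ioo (0:ℝ) r, ∀ z ∈ Ω t,
        ‖c₀ z * a z
            + ∑ i, c₁ i z * fderiv ℂ a z (e i)
            + ∑ j, c₂ j z * fderiv ℂ (fun w => fderiv ℂ a w (d j)) z (d' j)‖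
          ≤ C * M * ((m : ℝ) + 2) ^ (m + 2) / t ^ (m + 2) :=
  stmt_5_general r hr Ω hΩ n c₀ c₁ c₂ e d d' U hUΩ K hK
end

section
/- Under the hypotheses of the previous propagation step, define $\Psi_\eta(x_2) = \inf_{|y_1| < \eta\varepsilon_1} \Phi(y_1, x_2)$. Then for every $\varepsilon > 0$ there is $C_\varepsilon$ such that $|u_h(x_1, x_2)| \le C_\varepsilon e^{(\Psi_\eta(x_2) + \varepsilon)/h}$ for all $|x_1| < \eta\varepsilon_1$, $|x_2| < \eta\varepsilon_1$ and $h \in (0, h_0]$. -/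
/-!
At a fixed height `h` and second coordinate `x₂`, pick `y₁` in the disc `|y₁| < ηε₁` with
`Φ(y₁, x₂) < Ψ_η(x₂) + ε/2`; then `|u_h(y₁, x₂)| ≤ C_{ε/2} e^{(Ψ_η(x₂) + ε)/h}` by (i). Moving from
`y₁` to `x₁` costs, by the mean value theorem and (ii), at most `(C/h) e^{(δ₃/4 - δ₃)/h}` times
the diameter of the disc. Since `e^{-δ₃/(4h)}/h ≤ 4/δ₃`, this is `O(e^{-δ₃/(2h)})`, which is
dominated by `e^{(Ψ_η(x₂) + ε)/h}` because `Ψ_η ≥ -δ₃/4`.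
-/

open Complex Metric

section SetOfInf

variable {α : Type*} {p : α → Prop} {g : α → ℝ}

lemma le_sInf_setOf_eq_apply {m : ℝ} (hp : ∃ a, p a) (hm : ∀ a, p a → m ≤ g a) :
    m ≤ sInf {w : ℝ | ∃ a, p a ∧ w = g a} :=
  le_csInf (hp.elim fun a ha => ⟨g a, a, ha, rfl⟩) fun _ ⟨a, ha, hw⟩ => hw ▸ hm a ha

lemma exists_lt_sInf_setOf_eq_apply_add (hp : ∃ a, p a) {ε : ℝ} (hε : 0 < ε) :
    ∃ a, p a ∧ g a < sInf {w : ℝ | ∃ a, p a ∧ w = g a} + ε := by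
  obtain ⟨a, ha⟩ := hp
  obtain ⟨_, ⟨b, hb, rfl⟩, hlt⟩ :=
    Real.lt_sInf_add_pos (s := {w : ℝ | ∃ a, p a ∧ w = g a}) ⟨g a, a, ha, rfl⟩ hε
  exact ⟨b, hb, hlt⟩

end SetOfInf

lemma nonneg_of_norm_le_mul_exp {E : Type*} [SeminormedAddCommGroup E] {z : E} {C a : ℝ}
    (h : ‖z‖ ≤ C * Real.exp a) : 0 ≤ C :=
  (mul_nonneg_iff_of_pos_right (Real.exp_pos a)).mp ((norm_nonneg z).trans h)

lemma Real.exp_neg_div_div_le_inv {a h : ℝ} (ha : 0 < a) (hh : 0 < h) :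
    Real.exp (-a / h) / h ≤ a⁻¹ := by
  have hx : a / h ≤ Real.exp (a / h) := by linarith [Real.add_one_le_exp (a / h)]
  rw [neg_div, Real.exp_neg, div_le_iff₀ hh]
  calc (Real.exp (a / h))⁻¹ ≤ (a / h)⁻¹ := inv_anti₀ (by positivity) hx
    _ = a⁻¹ * h := by rw [inv_div, div_eq_inv_mul]

lemma div_mul_exp_neg_add_le {C a b h : ℝ} (hC : 0 ≤ C) (ha : 0 < a) (hh : 0 < h) :
    C / h * Real.exp (-(a + b) / h) ≤ C / a * Real.exp (-b / h) := by
  have hsplit : -(a + b) / h = -a / h + -b / h := by ring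
  calc C / h * Real.exp (-(a + b) / h) = C * (Real.exp (-a / h) / h) * Real.exp (-b / h) := by
        rw [hsplit, Real.exp_add]; ring
    _ ≤ C * a⁻¹ * Real.exp (-b / h) := by gcongr; exact Real.exp_neg_div_div_le_inv ha hh
    _ = C / a * Real.exp (-b / h) := by ring

lemma Real.mul_exp_div_le_mul_exp_div {C a b h : ℝ} (hC : 0 ≤ C) (hh : 0 ≤ h) (hab : a ≤ b) :
    C * Real.exp (a / h) ≤ C * Real.exp (b / h) :=
  mul_le_mul_of_nonneg_left (Real.exp_le_exp.mpr (div_le_div_of_nonneg_right hab hh)) hC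

lemma norm_le_div_mul_exp_of_norm_ofReal_mul_le {z : ℂ} {C a b h : ℝ} (hh : 0 < h) (hC : 0 ≤ C)
    (hab : a ≤ b) (hz : ‖(h : ℂ) * z‖ ≤ C * Real.exp (a / h)) :
    ‖z‖ ≤ C / h * Real.exp (b / h) := by
  rw [norm_mul, Complex.norm_real, Real.norm_of_nonneg hh.le] at hz
  rw [div_mul_eq_mul_div, le_div_iff₀' hh]
  exact hz.trans (Real.mul_exp_div_le_mul_exp_div hC hh.le hab)

lemma norm_le_norm_add_of_norm_deriv_le {𝕜 E : Type*} [RCLike 𝕜] [NormedAddCommGroup E]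
    [NormedSpace 𝕜 E] {f : 𝕜 → E} {c : 𝕜} {r M : ℝ} (hf : DifferentiableOn 𝕜 f (ball c r))
    (hM : ∀ w ∈ ball c r, ‖deriv f w‖ ≤ M) {x y : 𝕜} (hx : x ∈ ball c r) (hy : y ∈ ball c r) :
    ‖f x‖ ≤ ‖f y‖ + M * (2 * r) := by
  have hM0 : 0 ≤ M := (norm_nonneg _).trans (hM x hx)
  have hxy : ‖x - y‖ ≤ 2 * r := by
    rw [← dist_eq_norm]
    linarith [dist_triangle_right x y c, mem_ball.mp hx, mem_ball.mp hy]
  have hmvt : ‖f x - f y‖ ≤ M * ‖x - y‖ :=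
    (convex_ball c r).norm_image_sub_le_of_norm_deriv_le
      (fun w hw => hf.differentiableAt (isOpen_ball.mem_nhds hw)) hM hy hx
  calc ‖f x‖ ≤ ‖f y‖ + ‖f x - f y‖ := norm_le_norm_add_norm_sub' (f x) (f y)
    _ ≤ ‖f y‖ + M * (2 * r) := by gcongr; exact hmvt.trans (by gcongr)
theorem stmt_12_general (V : Set (ℂ × ℂ))
    (Φ : ℂ × ℂ → ℝ)
    (h₀ : ℝ) (u : ℝ → ℂ × ℂ → ℂ)
    (ε₁ δ₃ : ℝ) (hε₁ : 0 < ε₁) (hδ₃ : 0 < δ₃)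
    (hpoly : {x : ℂ × ℂ | ‖x.1‖ < ε₁ ∧ ‖x.2‖ < ε₁} ⊆ V)
    (hi : ∀ ε > 0, ∃ Cε : ℝ, ∀ h ∈ Set.Ioc (0:ℝ) h₀, ∀ x ∈ V,
      ‖u h x‖ ≤ Cε * Real.exp ((Φ x + ε) / h))
    (hhol : ∀ h ∈ Set.Ioc (0:ℝ) h₀, ∀ x₂ : ℂ, ‖x₂‖ < ε₁ →
      DifferentiableOn ℂ (fun w => u h (w, x₂)) (ball (0:ℂ) ε₁))
    (C : ℝ)
    (hii : ∀ h ∈ Set.Ioc (0:ℝ) h₀, ∀ x₁ x₂ : ℂ, ‖x₁‖ < ε₁ → ‖x₂‖ < ε₁ →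
      ‖h * deriv (fun w => u h (w, x₂)) x₁‖ ≤
        C * Real.exp ((Φ (x₁, x₂) - δ₃) / h))
    (η : ℝ) (hη1 : η ≤ 1)
    (hΦsmall : ∀ x : ℂ × ℂ, ‖x.1‖ < η * ε₁ → ‖x.2‖ < η * ε₁ →
      |Φ x| < δ₃ / 4)
    (Ψ : ℂ → ℝ)
    (hΨ : ∀ x₂ : ℂ, Ψ x₂ = sInf {w : ℝ | ∃ y₁ : ℂ, ‖y₁‖ < η * ε₁ ∧ w = Φ (y₁, x₂)}) :
    ∀ ε > 0, ∃ Cε : ℝ, ∀ h ∈ Set.Ioc (0:ℝ) h₀, ∀ x₁ x₂ : ℂ,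
      ‖x₁‖ < η * ε₁ → ‖x₂‖ < η * ε₁ →
      ‖u h (x₁, x₂)‖ ≤ Cε * Real.exp ((Ψ x₂ + ε) / h) := by
  intro ε hε
  obtain ⟨Cε, hCε⟩ := hi (ε / 2) (half_pos hε)
  refine ⟨Cε + C / (δ₃ / 4) * (2 * (η * ε₁)), fun h hh x₁ x₂ hx₁ hx₂ => ?_⟩
  have hr : η * ε₁ ≤ ε₁ := mul_le_of_le_one_left hε₁.le hη1
  have hx₂' : ‖x₂‖ < ε₁ := hx₂.trans_le hr
  have hC : 0 ≤ C := nonneg_of_norm_le_mul_exp (hii h hh x₁ x₂ (hx₁.trans_le hr) hx₂')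
  have hΦ (w : ℂ) (hw : ‖w‖ < η * ε₁) : -(δ₃ / 4) < Φ (w, x₂) ∧ Φ (w, x₂) < δ₃ / 4 :=
    abs_lt.mp (hΦsmall (w, x₂) hw hx₂)
  have hΨ_lb : -(δ₃ / 4) ≤ Ψ x₂ :=
    hΨ x₂ ▸ le_sInf_setOf_eq_apply (p := (‖·‖ < η * ε₁)) (g := fun y => Φ (y, x₂)) ⟨x₁, hx₁⟩ fun w hw => (hΦ w hw).1.le
  obtain ⟨y₁, hy₁, hΦy⟩ := exists_lt_sInf_setOf_eq_apply_add (p := (‖·‖ < η * ε₁))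
    (g := fun y => Φ (y, x₂)) ⟨x₁, hx₁⟩ (half_pos hε)
  rw [← hΨ x₂] at hΦy
  have hu_y : ‖u h (y₁, x₂)‖ ≤ Cε * Real.exp ((Ψ x₂ + ε) / h) := by
    have hbound := hCε h hh (y₁, x₂) (hpoly ⟨hy₁.trans_le hr, hx₂'⟩)
    exact hbound.trans <| Real.mul_exp_div_le_mul_exp_div (nonneg_of_norm_le_mul_exp hbound)
      hh.1.le (by linarith)
  have hderiv (w : ℂ) (hw : w ∈ ball 0 (η * ε₁)) :
      ‖deriv (fun w => u h (w, x₂)) w‖ ≤ C / h * Real.exp (-(δ₃ / 4 + δ₃ / 2) / h) := by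
    rw [mem_ball_zero_iff] at hw
    exact norm_le_div_mul_exp_of_norm_ofReal_mul_le hh.1 hC (by linarith [hΦ w hw])
      (hii h hh w x₂ (hw.trans_le hr) hx₂')
  have hgain : C / h * Real.exp (-(δ₃ / 4 + δ₃ / 2) / h) ≤
      C / (δ₃ / 4) * Real.exp ((Ψ x₂ + ε) / h) :=
    (div_mul_exp_neg_add_le hC (by positivity) hh.1).trans <|
      Real.mul_exp_div_le_mul_exp_div (by positivity) hh.1.le (by linarith)
  calc ‖u h (x₁, x₂)‖
      ≤ ‖u h (y₁, x₂)‖ + C / h * Real.exp (-(δ₃ / 4 + δ₃ / 2) / h) * (2 * (η * ε₁)) :=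
        norm_le_norm_add_of_norm_deriv_le ((hhol h hh x₂ hx₂').mono (ball_subset_ball hr)) hderiv
          (mem_ball_zero_iff.mpr hx₁) (mem_ball_zero_iff.mpr hy₁)
    _ ≤ Cε * Real.exp ((Ψ x₂ + ε) / h) +
          C / (δ₃ / 4) * Real.exp ((Ψ x₂ + ε) / h) * (2 * (η * ε₁)) := by
        gcongr
        exact mul_nonneg zero_le_two ((norm_nonneg x₁).trans hx₁.le)
    _ = (Cε + C / (δ₃ / 4) * (2 * (η * ε₁))) * Real.exp ((Ψ x₂ + ε) / h) := by ring

/-- Improved bound: `|u_h(x₁,x₂)| ≤ C_ε e^{(Ψ_η(x₂)+ε)/h}` where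
`Ψ_η(x₂) = inf_{|y₁| < ηε₁} Φ(y₁,x₂)`. -/
theorem stmt_12 (V : Set (ℂ × ℂ)) (hV : IsOpen V) (h0V : (0, 0) ∈ V)
    (Φ : ℂ × ℂ → ℝ) (hΦc : ContinuousOn Φ V) (hΦ0 : Φ (0, 0) = 0)
    (h₀ : ℝ) (hh₀ : 0 < h₀) (u : ℝ → ℂ × ℂ → ℂ)
    (ε₁ δ₃ : ℝ) (hε₁ : 0 < ε₁) (hδ₃ : 0 < δ₃)
    (hpoly : {x : ℂ × ℂ | ‖x.1‖ < ε₁ ∧ ‖x.2‖ < ε₁} ⊆ V)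
    (hi : ∀ ε > 0, ∃ Cε : ℝ, ∀ h ∈ Set.Ioc (0:ℝ) h₀, ∀ x ∈ V,
      ‖u h x‖ ≤ Cε * Real.exp ((Φ x + ε) / h))
    (hhol : ∀ h ∈ Set.Ioc (0:ℝ) h₀, ∀ x₂ : ℂ, ‖x₂‖ < ε₁ →
      DifferentiableOn ℂ (fun w => u h (w, x₂)) (ball (0:ℂ) ε₁))
    (C : ℝ)
    (hii : ∀ h ∈ Set.Ioc (0:ℝ) h₀, ∀ x₁ x₂ : ℂ, ‖x₁‖ < ε₁ → ‖x₂‖ < ε₁ →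
      ‖h * deriv (fun w => u h (w, x₂)) x₁‖ ≤
        C * Real.exp ((Φ (x₁, x₂) - δ₃) / h))
    (η : ℝ) (hη0 : 0 < η) (hη1 : η ≤ 1)
    (hΦsmall : ∀ x : ℂ × ℂ, ‖x.1‖ < η * ε₁ → ‖x.2‖ < η * ε₁ →
      |Φ x| < δ₃ / 4)
    (Ψ : ℂ → ℝ)
    (hΨ : ∀ x₂ : ℂ, Ψ x₂ = sInf {w : ℝ | ∃ y₁ : ℂ, ‖y₁‖ < η * ε₁ ∧ w = Φ (y₁, x₂)}) :
    ∀ ε > 0, ∃ Cε : ℝ, ∀ h ∈ Set.Ioc (0:ℝ) h₀, ∀ x₁ x₂ : ℂ,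
      ‖x₁‖ < η * ε₁ → ‖x₂‖ < η * ε₁ →
      ‖u h (x₁, x₂)‖ ≤ Cε * Real.exp ((Ψ x₂ + ε) / h) :=
  stmt_12_general V Φ h₀ u ε₁ δ₃ hε₁ hδ₃ hpoly hi hhol C hii η hη1 hΦsmall Ψ hΨ
end
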